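/- Let M, M̃ ∈ K^{m×k}, let J₁ ⊆ {1,…,k} and J₂ = {1,…,k}\J₁ with J₂ nonempty. Suppose ‖M̃*M − I_k‖ < 1. Then M̃_{J₁}*M_{J₁} is invertible and, setting E = I_m − M_{J₁}(M̃_{J₁}*M_{J₁})^{-1}M̃_{J₁}* (with E = I_m when J₁ = ∅), one has ‖M̃_{J₂}* E M_{J₂} − I_{|J₂|}‖ ≤ ‖M̃*M − I_k‖. -/

import Mathlib

/-! With `G = M̃ᴴ M` and `δ = ‖G - 1‖ < 1`: the diagonal block `G₁₁ - 1` is a compression of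
`G - 1`, so its norm is at most `δ < 1` and `G₁₁` is invertible. The matrix `M̃_{J₂}ᴴ E M_{J₂}` is
the Schur complement `S = G₂₂ - G₂₁ G₁₁⁻¹ G₁₂`. For a vector `x` on `J₂`, the vector
`z = (-G₁₁⁻¹ G₁₂ x, x)` satisfies `G z = (0, S x)`, hence `(G - 1) z = (-z₁, (S - 1) x)` and
`‖z₁‖² + ‖(S - 1) x‖² ≤ δ² (‖z₁‖² + ‖x‖²)`; since `δ ≤ 1` this gives `‖(S - 1) x‖ ≤ δ ‖x‖`. -/

open scoped BigOperators
open Matrix MeasureTheory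

noncomputable section

namespace ObliquePursuit

variable {𝕜 : Type*} [RCLike 𝕜]

/-- The Euclidean (`ℓ²`) norm of a finitely indexed vector. -/
def l2 {ι : Type*} [Fintype ι] (x : ι → 𝕜) : ℝ :=
  Real.sqrt (∑ i, ‖x i‖ ^ 2)

/-- The spectral (`ℓ² → ℓ²` operator) norm of a matrix. -/
def specNorm {ι κ : Type*} [Fintype ι] [Fintype κ] [DecidableEq κ]
    (M : Matrix ι κ 𝕜) : ℝ :=
  ‖LinearMap.toContinuousLinearMap (Matrix.toEuclideanLin M)‖

/-- `x` is `s`-sparse: it has at most `s` nonzero entries. -/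
def Sparse {ι : Type*} (s : ℕ) (x : ι → 𝕜) : Prop :=
  ∃ J : Finset ι, J.card ≤ s ∧ ∀ i, x i ≠ 0 → i ∈ J

/-- The `s`-restricted biorthogonality constant `θ_s(M)`: the smallest `δ ≥ 0` such that
`|⟨y, Mx⟩ − ⟨y, x⟩| ≤ δ‖x‖₂‖y‖₂` for all `x, y` supported on a common index set of
cardinality at most `s`. -/
def theta {ι : Type*} [Fintype ι] (s : ℕ) (M : Matrix ι ι 𝕜) : ℝ :=
  sInf {δ : ℝ | 0 ≤ δ ∧ ∀ J : Finset ι, J.card ≤ s →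
    ∀ x y : ι → 𝕜, (∀ i, x i ≠ 0 → i ∈ J) → (∀ i, y i ≠ 0 → i ∈ J) →
      ‖star y ⬝ᵥ M.mulVec x - star y ⬝ᵥ x‖ ≤ δ * l2 x * l2 y}

/-- The `s`-restricted isometry constant `δ_s(Ψ)`. -/
def ric {ι κ : Type*} [Fintype ι] [Fintype κ] (s : ℕ) (Ψ : Matrix ι κ 𝕜) : ℝ :=
  sInf {δ : ℝ | 0 ≤ δ ∧ ∀ x : κ → 𝕜, Sparse s x →
    (1 - δ) * l2 x ^ 2 ≤ l2 (Ψ.mulVec x) ^ 2 ∧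
      l2 (Ψ.mulVec x) ^ 2 ≤ (1 + δ) * l2 x ^ 2}

/-- Coordinate projection `Π_J`: keep the entries indexed by `J`, zero out the others. -/
def proj {ι : Type*} [DecidableEq ι] (J : Finset ι) (x : ι → 𝕜) : ι → 𝕜 :=
  fun i => if i ∈ J then x i else 0

/-- The column submatrix `Ψ_J` of `Ψ` formed by the columns indexed by `J`. -/
def cols {ι κ : Type*} (Ψ : Matrix ι κ 𝕜) (J : Finset κ) :
    Matrix ι {j // j ∈ J} 𝕜 :=
  Ψ.submatrix id fun j => (j : κ)

/-- The `j`-th column of `Ψ`. -/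
def col {ι κ : Type*} (Ψ : Matrix ι κ 𝕜) (j : κ) : ι → 𝕜 :=
  fun i => Ψ i j

/-- The complementary oblique projector `E = I − Ψ_J (Ψ̃_J^* Ψ_J)⁻¹ Ψ̃_J^*`
(equal to `I` when `J = ∅`). -/
def obliqueE {ι κ : Type*} [Fintype ι] [DecidableEq ι] [DecidableEq κ]
    (Ψ Ψt : Matrix ι κ 𝕜) (J : Finset κ) : Matrix ι ι 𝕜 :=
  1 - cols Ψ J * ((cols Ψt J)ᴴ * cols Ψ J)⁻¹ * (cols Ψt J)ᴴ

/-- The smallest (real) eigenvalue of a matrix. -/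
def lamMin {ι : Type*} [Fintype ι] (G : Matrix ι ι 𝕜) : ℝ :=
  sInf {r : ℝ | ∃ v : ι → 𝕜, v ≠ 0 ∧ G.mulVec v = (r : 𝕜) • v}

/-- The `j`-th largest singular value (1-indexed) of a matrix, characterized via the
Eckart–Young–Mirsky theorem: `σ_j(A) = min { ‖A − B‖ : rank B < j }` where `‖·‖` is the
spectral norm. -/
def singVal {ι κ : Type*} [Fintype ι] [Fintype κ] [DecidableEq κ]
    (A : Matrix ι κ 𝕜) (j : ℕ) : ℝ :=
  sInf {r : ℝ | ∃ B : Matrix ι κ 𝕜, B.rank < j ∧ r = specNorm (A - B)}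

section Euclidean

variable {ι κ : Type*} [Fintype ι] [Fintype κ] [DecidableEq κ]

lemma l2_sq (x : ι → 𝕜) : l2 x ^ 2 = ∑ i, ‖x i‖ ^ 2 :=
  Real.sq_sqrt (Finset.sum_nonneg fun _ _ => sq_nonneg _)

lemma l2_eq_norm_toLp (x : ι → 𝕜) : l2 x = ‖(WithLp.toLp 2 x : EuclideanSpace 𝕜 ι)‖ := by
  rw [EuclideanSpace.norm_eq]; rfl

lemma l2_nonneg (x : ι → 𝕜) : 0 ≤ l2 x :=
  Real.sqrt_nonneg _

lemma l2_neg (x : ι → 𝕜) : l2 (-x) = l2 x := by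
  rw [l2_eq_norm_toLp, l2_eq_norm_toLp, WithLp.toLp_neg, norm_neg]

lemma l2_eq_zero {x : ι → 𝕜} : l2 x = 0 ↔ x = 0 := by
  rw [l2_eq_norm_toLp, norm_eq_zero, ← WithLp.toLp_zero, (WithLp.toLp_injective 2).eq_iff]

@[simp] lemma l2_zero : l2 (0 : ι → 𝕜) = 0 :=
  l2_eq_zero.2 rfl

lemma l2_mulVec_le (M : Matrix ι κ 𝕜) (x : κ → 𝕜) : l2 (M *ᵥ x) ≤ specNorm M * l2 x := by
  simpa [specNorm, l2_eq_norm_toLp] using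
    (LinearMap.toContinuousLinearMap (Matrix.toEuclideanLin M)).le_opNorm (WithLp.toLp 2 x)

lemma l2_mulVec_sq_le (M : Matrix ι κ 𝕜) (x : κ → 𝕜) :
    l2 (M *ᵥ x) ^ 2 ≤ specNorm M ^ 2 * l2 x ^ 2 := by
  rw [← mul_pow]
  exact pow_le_pow_left₀ (l2_nonneg _) (l2_mulVec_le M x) 2

lemma specNorm_le_of_l2_mulVec_sq_le {M : Matrix ι κ 𝕜} {C : ℝ} (hC : 0 ≤ C)
    (h : ∀ x, l2 (M *ᵥ x) ^ 2 ≤ C ^ 2 * l2 x ^ 2) : specNorm M ≤ C := by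
  refine ContinuousLinearMap.opNorm_le_bound _ hC fun v => ?_
  have hv := h v.ofLp
  rw [← mul_pow, pow_le_pow_iff_left₀ (l2_nonneg _) (mul_nonneg hC (l2_nonneg _))
    two_ne_zero] at hv
  simpa [l2_eq_norm_toLp, Matrix.toLpLin_apply] using hv

lemma isUnit_det_of_specNorm_sub_one_lt_one [DecidableEq ι] {A : Matrix ι ι 𝕜}
    (h : specNorm (A - 1) < 1) : IsUnit A.det := by
  rw [isUnit_iff_ne_zero]
  intro hdet
  obtain ⟨v, hv0, hAv⟩ := Matrix.exists_mulVec_eq_zero_iff.2 hdet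
  have hle := l2_mulVec_le (A - 1) v
  rw [Matrix.sub_mulVec, hAv, Matrix.one_mulVec, zero_sub, l2_neg] at hle
  have hpos : 0 < l2 v := (l2_nonneg v).lt_of_ne' (l2_eq_zero.not.2 hv0)
  nlinarith

end Euclidean

section Submatrix

variable {ι κ : Type*}

def block (A : Matrix ι κ 𝕜) (I : Finset ι) (J : Finset κ) : Matrix I J 𝕜 :=
  A.submatrix (↑) (↑)

lemma block_sub_one [DecidableEq ι] (A : Matrix ι ι 𝕜) (J : Finset ι) :
    block (A - 1) J J = block A J J - 1 := by
  rw [block, block, ← Matrix.submatrix_one ((↑) : J → ι) Subtype.val_injective]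
  rfl

lemma conjTranspose_cols_mul_cols [Fintype ι] (Ψ Ψt : Matrix ι κ 𝕜) (I J : Finset κ) :
    (cols Ψt I)ᴴ * cols Ψ J = block (Ψtᴴ * Ψ) I J := by
  rw [cols, cols, block, Matrix.conjTranspose_submatrix,
    Matrix.submatrix_mul _ _ _ _ _ Function.bijective_id]

end Submatrix

section Blocks

variable {ι : Type*} [Fintype ι] [DecidableEq ι]

def blockVec {α : Type*} (J : Finset ι) (u : J → α) (w : (Jᶜ : Finset ι) → α) : ι → α :=
  fun i => if h : i ∈ J then u ⟨i, h⟩ else w ⟨i, Finset.mem_compl.2 h⟩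

section

variable {α : Type*} (J : Finset ι) (u : J → α) (w : (Jᶜ : Finset ι) → α)

@[simp] lemma blockVec_coe (j : J) : blockVec J u w j = u j := by
  simp [blockVec]

@[simp] lemma blockVec_coe_compl (j : (Jᶜ : Finset ι)) : blockVec J u w j = w j := by
  simp [blockVec, Finset.mem_compl.1 j.2]

lemma eq_blockVec_iff {x : ι → α} :
    x = blockVec J u w ↔ (∀ j : J, x j = u j) ∧ ∀ j : (Jᶜ : Finset ι), x j = w j := by
  refine ⟨by rintro rfl; simp, fun ⟨hu, hw⟩ => funext fun i => ?_⟩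
  by_cases hi : i ∈ J
  · simpa [blockVec, hi] using hu ⟨i, hi⟩
  · simpa [blockVec, hi] using hw ⟨i, Finset.mem_compl.2 hi⟩

end

variable (J : Finset ι) (u : J → 𝕜) (w : (Jᶜ : Finset ι) → 𝕜)

lemma l2_sq_eq_add_compl (x : ι → 𝕜) :
    l2 x ^ 2 = l2 (fun j : J => x j) ^ 2 + l2 (fun j : (Jᶜ : Finset ι) => x j) ^ 2 := by
  simp only [l2_sq]
  rw [Finset.sum_coe_sort J (fun i => ‖x i‖ ^ 2), Finset.sum_coe_sort Jᶜ (fun i => ‖x i‖ ^ 2),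
    Finset.sum_add_sum_compl]

lemma l2_blockVec_sq : l2 (blockVec J u w) ^ 2 = l2 u ^ 2 + l2 w ^ 2 := by
  simp [l2_sq_eq_add_compl J]

lemma mulVec_blockVec_coe {κ : Type*} (A : Matrix κ ι 𝕜) (I : Finset κ) (i : I) :
    (A *ᵥ blockVec J u w) i = (block A I J *ᵥ u) i + (block A I Jᶜ *ᵥ w) i := by
  simp only [Matrix.mulVec, dotProduct, block, Matrix.submatrix_apply]
  rw [← Finset.sum_add_sum_compl J, ← Finset.sum_coe_sort J, ← Finset.sum_coe_sort Jᶜ]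
  simp

lemma specNorm_block_le {κ : Type*} [Fintype κ] [DecidableEq κ] (A : Matrix κ ι 𝕜)
    (I : Finset κ) : specNorm (block A I J) ≤ specNorm A := by
  refine specNorm_le_of_l2_mulVec_sq_le (norm_nonneg _) fun x => ?_
  have hrows : block A I J *ᵥ x = fun i : I => (A *ᵥ blockVec J x 0) i := by
    ext i; simp [mulVec_blockVec_coe]
  calc l2 (block A I J *ᵥ x) ^ 2 ≤ l2 (A *ᵥ blockVec J x 0) ^ 2 := by
        rw [hrows, l2_sq_eq_add_compl I (A *ᵥ blockVec J x 0)]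
        exact le_add_of_nonneg_right (sq_nonneg _)
    _ ≤ specNorm A ^ 2 * l2 x ^ 2 := by
        simpa [l2_blockVec_sq] using l2_mulVec_sq_le A (blockVec J x 0)

end Blocks

section Schur

variable {ι : Type*} [Fintype ι] [DecidableEq ι] (G : Matrix ι ι 𝕜) (J : Finset ι)

def schurCompl : Matrix (Jᶜ : Finset ι) (Jᶜ : Finset ι) 𝕜 :=
  block G Jᶜ Jᶜ - block G Jᶜ J * (block G J J)⁻¹ * block G J Jᶜ

lemma mulVec_blockVec_schurCompl (hG : IsUnit (block G J J).det) (x : (Jᶜ : Finset ι) → 𝕜) :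
    G *ᵥ blockVec J (-((block G J J)⁻¹ *ᵥ block G J Jᶜ *ᵥ x)) x
      = blockVec J 0 (schurCompl G J *ᵥ x) := by
  rw [eq_blockVec_iff]
  refine ⟨fun j => ?_, fun j => ?_⟩
  · rw [mulVec_blockVec_coe, Matrix.mulVec_neg, Matrix.mulVec_mulVec,
      Matrix.mul_nonsing_inv _ hG, Matrix.one_mulVec]
    simp
  · rw [mulVec_blockVec_coe, schurCompl, Matrix.mulVec_neg, Matrix.mulVec_mulVec,
      Matrix.mulVec_mulVec, Matrix.sub_mulVec, Matrix.mul_assoc]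
    simp only [Pi.neg_apply, Pi.sub_apply]
    ring

theorem specNorm_schurCompl_sub_one_le (hG : IsUnit (block G J J).det)
    (hδ : specNorm (G - 1) ≤ 1) : specNorm (schurCompl G J - 1) ≤ specNorm (G - 1) := by
  refine specNorm_le_of_l2_mulVec_sq_le (norm_nonneg _) fun x => ?_
  set y := -((block G J J)⁻¹ *ᵥ block G J Jᶜ *ᵥ x)
  have hz : (G - 1) *ᵥ blockVec J y x = blockVec J (-y) ((schurCompl G J - 1) *ᵥ x) := by
    rw [Matrix.sub_mulVec, mulVec_blockVec_schurCompl G J hG, Matrix.one_mulVec, eq_blockVec_iff]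
    simp [Matrix.sub_mulVec]
  have hbound := l2_mulVec_sq_le (G - 1) (blockVec J y x)
  rw [hz, l2_blockVec_sq, l2_blockVec_sq, l2_neg] at hbound
  have hδ2 : specNorm (G - 1) ^ 2 ≤ 1 := pow_le_one₀ (norm_nonneg _) hδ
  nlinarith [sq_nonneg (l2 y), mul_le_mul_of_nonneg_right hδ2 (sq_nonneg (l2 y))]

end Schur

lemma conjTranspose_cols_compl_mul_obliqueE_mul_cols_compl {ι κ : Type*} [Fintype ι]
    [DecidableEq ι] [Fintype κ] [DecidableEq κ] (Ψ Ψt : Matrix ι κ 𝕜) (J : Finset κ) :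
    (cols Ψt Jᶜ)ᴴ * obliqueE Ψ Ψt J * cols Ψ Jᶜ = schurCompl (Ψtᴴ * Ψ) J := by
  simp only [schurCompl, obliqueE, Matrix.mul_sub, Matrix.sub_mul, Matrix.mul_one,
    Matrix.mul_assoc, conjTranspose_cols_mul_cols]
  simp only [← Matrix.mul_assoc, conjTranspose_cols_mul_cols]

theorem statement3_general (m k : ℕ) (M Mt : Matrix (Fin m) (Fin k) 𝕜)
    (J₁ : Finset (Fin k))
    (hcontr : specNorm (Mtᴴ * M - 1) < 1) :
    IsUnit ((cols Mt J₁)ᴴ * cols M J₁).det ∧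
      specNorm ((cols Mt J₁ᶜ)ᴴ * obliqueE M Mt J₁ * cols M J₁ᶜ - 1) ≤
        specNorm (Mtᴴ * M - 1) := by
  have hdiag : specNorm (block (Mtᴴ * M) J₁ J₁ - 1) < 1 := by
    rw [← block_sub_one]
    exact (specNorm_block_le J₁ _ J₁).trans_lt hcontr
  have hunit := isUnit_det_of_specNorm_sub_one_lt_one hdiag
  rw [conjTranspose_cols_mul_cols, conjTranspose_cols_compl_mul_obliqueE_mul_cols_compl]
  exact ⟨hunit, specNorm_schurCompl_sub_one_le _ J₁ hunit hcontr.le⟩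

/-- biorthogonality is preserved under the oblique projection
`E = I − M_{J₁}(M̃_{J₁}^* M_{J₁})⁻¹ M̃_{J₁}^*`. -/
theorem statement3 (m k : ℕ) (M Mt : Matrix (Fin m) (Fin k) 𝕜)
    (J₁ : Finset (Fin k)) (hJ₂ : (J₁ᶜ).Nonempty)
    (hcontr : specNorm (Mtᴴ * M - 1) < 1) :
    IsUnit ((cols Mt J₁)ᴴ * cols M J₁).det ∧
      specNorm ((cols Mt J₁ᶜ)ᴴ * obliqueE M Mt J₁ * cols M J₁ᶜ - 1) ≤
        specNorm (Mtᴴ * M - 1) :=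
  statement3_general m k M Mt J₁ hcontr

end ObliquePursuit
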